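/- arXiv:1211.3160 — 5 statements merged into one kernel-verified Lean document; each statement's English description precedes it below -/
import Mathlib

section
/- For every real x > 0, the inequality 2x·e^{3x} − 2e^{3x} + 2x·e^x + 2e^x < e^{4x} − 4x·e^{2x} − 1 holds. -/
open Real

/-- For every real `x > 0`,
`2x·e^{3x} − 2e^{3x} + 2x·e^x + 2e^x < e^{4x} − 4x·e^{2x} − 1`. -/
theorem stmt0 (x : ℝ) (hx : 0 < x) :
    2*x*exp (3*x) - 2*exp (3*x) + 2*x*exp x + 2*exp x
      < exp (4*x) - 4*x*exp (2*x) - 1 := by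
  have ht : 0 < exp x := exp_pos x
  have h2 : exp (2*x) = exp x ^ 2 := by rw [two_mul, exp_add, sq]
  have h3 : exp (3*x) = exp x ^ 3 := by
    rw [show (3:ℝ)*x = x + x + x by ring, exp_add, exp_add]; ring
  have h4 : exp (4*x) = exp x ^ 4 := by
    rw [show (4:ℝ)*x = x + x + (x + x) by ring, exp_add, exp_add]; ring
  have hs : x < Real.sinh x := Real.self_lt_sinh_iff.mpr hx
  have hsinh : Real.sinh x = (exp x - exp (-x)) / 2 := Real.sinh_eq x
  have hinv : exp (-x) * exp x = 1 := by rw [← exp_add]; simp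
  have key : 2 * x * exp x < exp x ^ 2 - 1 := by
    have := (mul_lt_mul_of_pos_right hs ht)
    rw [hsinh] at this
    nlinarith [this, hinv]
  rw [h2, h3, h4]
  nlinarith [key, sq_nonneg (exp x + 1), mul_pos ht ht, sq_nonneg (exp x)]
end

section
/- Fix y ∈ [−1, 1]. The function T_y(r) = ((1 − r²)/(−ln r)) · 1/(1 − 2ry + r²) satisfies T_y'(r) > 0 for all r ∈ (0, 1); in particular T_y is strictly increasing on (0,1). -/
open Real Set

lemma key_ineq {r : ℝ} (hr0 : 0 < r) (hr1 : r < 1) :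
    2 * (-Real.log r) < 1/r - r := by
  have h1x : (1:ℝ) < 1/r := (one_lt_div hr0).mpr hr1
  -- φ(x) = x - 1/x - 2 log x strictly mono on [1, ∞)
  have hmono : StrictMonoOn (fun x : ℝ => x - 1/x - 2 * Real.log x) (Ici 1) := by
    apply strictMonoOn_of_deriv_pos (convex_Ici 1)
    · apply ContinuousOn.sub
      · exact (continuousOn_id.sub (continuousOn_const.div continuousOn_id
          (fun x hx => by simp at hx; positivity)))
      · exact continuousOn_const.mul (Real.continuousOn_log.mono
          (fun x hx => by simp at hx ⊢; positivity))
    · intro x hx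
      rw [interior_Ici] at hx
      simp only [mem_Ioi] at hx
      have hx0 : (0:ℝ) < x := by linarith
      have hd : HasDerivAt (fun x : ℝ => x - 1/x - 2 * Real.log x)
          (1 - (-(1/x^2)) - 2 * (1/x)) x := by
        have h1 : HasDerivAt (fun x : ℝ => 1/x) (-(1/x^2)) x := by
          simpa [one_div] using (hasDerivAt_inv (ne_of_gt hx0))
        have h2 : HasDerivAt (fun x : ℝ => 2 * Real.log x) (2 * (1/x)) x := by
          simpa [one_div] using (Real.hasDerivAt_log (ne_of_gt hx0)).const_mul 2
        exact ((hasDerivAt_id x).sub h1).sub h2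
      rw [hd.deriv]
      have h : 0 < (1 - 1/x)^2 := by
        have : 1/x < 1 := by rw [div_lt_one hx0]; exact hx
        nlinarith
      have hx2 : (0:ℝ) < x^2 := by positivity
      field_simp at h ⊢
      nlinarith [h]
  have := hmono (self_mem_Ici) (mem_Ici.mpr h1x.le) h1x
  simp only [Real.log_one, one_div_one] at this
  have hlog : Real.log (1/r) = -Real.log r := by
    rw [one_div, Real.log_inv]
  rw [hlog] at this
  have : 0 < 1/r - 1/(1/r) - 2 * (-Real.log r) := by simpa using this
  have hinv : 1/(1/r) = r := by field_simp
  rw [hinv] at this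
  linarith

lemma main_deriv (y r : ℝ) (hy : y ∈ Icc (-1 : ℝ) 1) (hr : r ∈ Ioo (0 : ℝ) 1) :
    ∃ D, HasDerivAt (fun r : ℝ => (1 - r^2)/(-Real.log r) * (1/(1 - 2*r*y + r^2))) D r
      ∧ 0 < D := by
  obtain ⟨hr0, hr1⟩ := hr
  obtain ⟨hy1, hy2⟩ := hy
  have hlogneg : Real.log r < 0 := Real.log_neg hr0 hr1
  set L : ℝ := -Real.log r with hLdef
  have hL : 0 < L := by simp [hLdef]; linarith
  have hLne : L ≠ 0 := ne_of_gt hL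
  have hQ : 0 < 1 - 2*r*y + r^2 := by nlinarith [sq_nonneg (1-r)]
  have hQne : (1 - 2*r*y + r^2) ≠ 0 := ne_of_gt hQ
  -- derivative of numerator
  have hnum : HasDerivAt (fun r : ℝ => 1 - r^2) (-(2*r)) r := by
    simpa using ((hasDerivAt_pow 2 r).const_sub 1)
  have hden : HasDerivAt (fun r : ℝ => -Real.log r) (-(1/r)) r := by
    rw [one_div]; exact (Real.hasDerivAt_log (ne_of_gt hr0)).neg
  have hf : HasDerivAt (fun r : ℝ => (1 - r^2)/(-Real.log r))
      ((-(2*r) * (-Real.log r) - (1 - r^2) * (-(1/r))) / (-Real.log r)^2) r :=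
    hnum.div hden (by simpa [hLdef] using hLne)
  have hQd : HasDerivAt (fun r : ℝ => 1 - 2*r*y + r^2) (2*r - 2*y) r := by
    have h : HasDerivAt (fun x : ℝ => 1 - 2*y*x + x^2) (-(2*y*1) + 2*r^1) r :=
      (((hasDerivAt_id r).const_mul (2*y)).const_sub 1).add (hasDerivAt_pow 2 r)
    have heq : (fun r : ℝ => 1 - 2*r*y + r^2) = (fun x : ℝ => 1 - 2*y*x + x^2) := by
      funext x; ring
    rw [heq]
    convert h using 1; ring
  have hg : HasDerivAt (fun r : ℝ => 1/(1 - 2*r*y + r^2))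
      ((0 * (1 - 2*r*y + r^2) - 1 * (2*r - 2*y)) / (1 - 2*r*y + r^2)^2) r :=
    (hasDerivAt_const r 1).div hQd hQne
  have hF := hf.mul hg
  refine ⟨_, hF, ?_⟩
  -- positivity of the derivative value
  set Q : ℝ := 1 - 2*r*y + r^2 with hQdef
  have key := key_ineq hr0 hr1
  -- M = r*L*(2*y*(1+r^2) - 4*r) + (1-r^2)*Q
  have hM1 : 0 < (1-r)^2 * (2*r*L + (1 - r^2)) := by
    have : 0 < (1-r)^2 := by nlinarith
    have h2 : 0 < 2*r*L + (1 - r^2) := by nlinarith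
    positivity
  have hM2 : 0 < (1+r)^2 * ((1 - r^2) - 2*r*L) := by
    have h1 : 0 < (1+r)^2 := by nlinarith
    have h2 : 0 < (1 - r^2) - 2*r*L := by
      have : 2*L < 1/r - r := key
      have := mul_lt_mul_of_pos_left this hr0
      have hr' : r * (1/r - r) = 1 - r^2 := by field_simp
      nlinarith
    positivity
  have hM : 0 < r*L*(2*y*(1+r^2) - 4*r) + (1-r^2)*Q := by
    have e1 : r*L*(2*y*(1+r^2) - 4*r) + (1-r^2)*Q
        = ((1+y)/2) * ((1-r)^2 * (2*r*L + (1 - r^2)))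
          + ((1-y)/2) * ((1+r)^2 * ((1 - r^2) - 2*r*L)) := by
      simp only [hQdef]; ring
    rw [e1]
    have h1 : 0 ≤ (1+y)/2 := by linarith
    have h2 : 0 ≤ (1-y)/2 := by linarith
    rcases eq_or_lt_of_le h1 with h1' | h1'
    · have hy' : y = -1 := by linarith
      rw [← h1']; simp
      have : (1-y)/2 = 1 := by rw [hy']; norm_num
      rw [this]; simpa using hM2
    · nlinarith [mul_nonneg h2 hM2.le, mul_pos h1' hM1]
  -- show the derivative value equals M / (r * L^2 * Q^2)
  have heq : (-(2*r) * (-Real.log r) - (1 - r^2) * (-(1/r))) / (-Real.log r)^2 * (1/Q)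
      + (1 - r^2)/(-Real.log r) * ((0 * Q - 1 * (2*r - 2*y)) / Q^2)
      = (r*L*(2*y*(1+r^2) - 4*r) + (1-r^2)*Q) / (r * L^2 * Q^2) := by
    rw [show -Real.log r = L from rfl]
    field_simp
    ring
  rw [heq]
  positivity

/-- For fixed `y ∈ [−1,1]`, the function
`T_y(r) = ((1 − r²)/(−ln r)) · 1/(1 − 2ry + r²)` has positive derivative on `(0,1)`;
in particular it is strictly increasing on `(0,1)`. -/
theorem stmt2 (y : ℝ) (hy : y ∈ Icc (-1 : ℝ) 1) :
    (∀ r ∈ Ioo (0 : ℝ) 1,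
      0 < deriv (fun r : ℝ => (1 - r^2)/(-Real.log r) * (1/(1 - 2*r*y + r^2))) r) ∧
    StrictMonoOn (fun r : ℝ => (1 - r^2)/(-Real.log r) * (1/(1 - 2*r*y + r^2)))
      (Ioo (0 : ℝ) 1) := by
  have hmain : ∀ r ∈ Ioo (0 : ℝ) 1,
      0 < deriv (fun r : ℝ => (1 - r^2)/(-Real.log r) * (1/(1 - 2*r*y + r^2))) r := by
    intro r hr
    obtain ⟨D, hD, hDpos⟩ := main_deriv y r hy hr
    rw [hD.deriv]; exact hDpos
  refine ⟨hmain, ?_⟩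
  apply strictMonoOn_of_deriv_pos (convex_Ioo 0 1)
  · intro r hr
    obtain ⟨D, hD, _⟩ := main_deriv y r hy hr
    exact hD.differentiableAt.continuousAt.continuousWithinAt
  · intro r hr
    rw [interior_Ioo] at hr
    exact hmain r hr
end

section
/- For y ∈ [−1,1], the function f(x) = ((1 − e^{−2x})/x) · 1/(1 − 2e^{−x}y + e^{−2x}) is strictly decreasing on (0, +∞). -/
open Real Set

private lemma sinh_key {x : ℝ} (hx : 0 < x) :
    1 - exp (-2*x) - 2*x*exp (-x) > 0 := by
  have h := Real.self_lt_sinh_iff.mpr hx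
  have hs : Real.sinh x = (exp x - exp (-x)) / 2 := Real.sinh_eq x
  have hpos : 0 < exp (-x) := Real.exp_pos _
  have key : exp x - exp (-x) - 2*x > 0 := by rw [hs] at h; linarith
  have h2 : exp (-2*x) = exp (-x) * exp (-x) := by
    rw [← Real.exp_add]; ring_nf
  have hmul : exp (-x) * (exp x - exp (-x) - 2*x) > 0 := mul_pos hpos key
  have hex : exp (-x) * exp x = 1 := by rw [← Real.exp_add]; simp
  nlinarith [hmul, h2, hex]

private lemma hasDerivAt_aux (y x : ℝ) (hx : 0 < x)
    (hD : x * (1 - 2*exp (-x)*y + exp (-2*x)) ≠ 0) :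
    HasDerivAt (fun x : ℝ => (1 - exp (-2*x)) / (x * (1 - 2*exp (-x)*y + exp (-2*x))))
      ((2*exp (-2*x) * (x * (1 - 2*exp (-x)*y + exp (-2*x))) -
        (1 - exp (-2*x)) * ((1 - 2*exp (-x)*y + exp (-2*x)) +
          x * (2*exp (-x)*y - 2*exp (-2*x)))) /
        (x * (1 - 2*exp (-x)*y + exp (-2*x)))^2) x := by
  have he1 : HasDerivAt (fun x : ℝ => exp (-x)) (-exp (-x)) x := by
    have := ((hasDerivAt_id x).neg).exp
    simpa using this
  have he2 : HasDerivAt (fun x : ℝ => exp (-2*x)) (-2*exp (-2*x)) x := by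
    have h0 : HasDerivAt (fun x : ℝ => -2*x) (-2) x := by
      simpa using (hasDerivAt_id x).const_mul (-2)
    have := h0.exp
    simpa [mul_comm] using this
  have hN : HasDerivAt (fun x : ℝ => 1 - exp (-2*x)) (2*exp (-2*x)) x := by
    have := (hasDerivAt_const x (1:ℝ)).fun_sub he2
    simpa using this
  have hDp : HasDerivAt (fun x : ℝ => 1 - 2*exp (-x)*y + exp (-2*x))
      (2*exp (-x)*y - 2*exp (-2*x)) x := by
    have h1 : HasDerivAt (fun x : ℝ => 2*exp (-x)*y) (2*(-exp (-x))*y) x := by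
      exact (he1.const_mul 2).mul_const y
    have := ((hasDerivAt_const x (1:ℝ)).fun_sub h1).fun_add he2
    exact this.congr_deriv (by ring)
  have hG : HasDerivAt (fun x : ℝ => x * (1 - 2*exp (-x)*y + exp (-2*x)))
      ((1 - 2*exp (-x)*y + exp (-2*x)) + x * (2*exp (-x)*y - 2*exp (-2*x))) x := by
    have := (hasDerivAt_id x).fun_mul hDp
    simp only [id_eq] at this
    exact this.congr_deriv (by ring)
  exact hN.div hG hD

/-- For `y ∈ [−1,1]`, the function
`f(x) = ((1 − e^{−2x})/x) · 1/(1 − 2e^{−x}y + e^{−2x})` is strictly decreasing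
on `(0, +∞)`. -/
theorem stmt3 (y : ℝ) (hy : y ∈ Icc (-1 : ℝ) 1) :
    StrictAntiOn
      (fun x : ℝ => (1 - exp (-2*x))/x * (1/(1 - 2*exp (-x)*y + exp (-2*x))))
      (Ioi (0 : ℝ)) := by
  obtain ⟨hy1, hy2⟩ := hy
  -- rewrite the function as a single quotient
  have hfun : (fun x : ℝ => (1 - exp (-2*x))/x * (1/(1 - 2*exp (-x)*y + exp (-2*x))))
      = fun x : ℝ => (1 - exp (-2*x)) / (x * (1 - 2*exp (-x)*y + exp (-2*x))) := by
    funext x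
    rw [div_mul_div_comm, mul_one]
  rw [hfun]
  -- basic positivity facts
  have hDpos : ∀ x : ℝ, 0 < x → 0 < 1 - 2*exp (-x)*y + exp (-2*x) := by
    intro x hx
    have hr1 : exp (-x) < 1 := Real.exp_lt_one_iff.mpr (by linarith)
    have hr0 : 0 < exp (-x) := Real.exp_pos _
    have h2 : exp (-2*x) = exp (-x) * exp (-x) := by
      rw [← Real.exp_add]; ring_nf
    have hry : exp (-x) * y < 1 := by
      calc exp (-x) * y ≤ exp (-x) * 1 := by
            apply mul_le_mul_of_nonneg_left hy2 hr0.le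
          _ < 1 := by linarith
    nlinarith [sq_nonneg (1 - exp (-x) * y), sq_nonneg y, mul_pos hr0 hr0]
  have hGne : ∀ x : ℝ, 0 < x → x * (1 - 2*exp (-x)*y + exp (-2*x)) ≠ 0 := by
    intro x hx
    exact (mul_pos hx (hDpos x hx)).ne'
  apply strictAntiOn_of_deriv_neg (convex_Ioi 0)
  · intro x hx
    exact ((hasDerivAt_aux y x hx (hGne x hx)).continuousAt).continuousWithinAt
  · intro x hx
    rw [interior_Ioi] at hx
    have hx : 0 < x := hx
    rw [(hasDerivAt_aux y x hx (hGne x hx)).deriv]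
    apply div_neg_of_neg_of_pos
    · -- numerator negative
      set r := exp (-x) with hr
      have hr0 : 0 < r := Real.exp_pos _
      have hr1 : r < 1 := Real.exp_lt_one_iff.mpr (by linarith)
      have h2 : exp (-2*x) = r * r := by
        rw [hr, ← Real.exp_add]; ring_nf
      have hsinh : 1 - r*r - 2*x*r > 0 := by
        have := sinh_key hx
        rw [h2] at this
        linarith
      rw [h2]
      have hE1 : (1 - r)^2 * (1 - r*r + 2*r*x) > 0 := by
        have h : (0:ℝ) < 1 - r*r + 2*r*x := by nlinarith
        exact mul_pos (pow_pos (by linarith) 2) h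
      have hE2 : (1 + r)^2 * (1 - r*r - 2*r*x) > 0 := by
        have h : (0:ℝ) < 1 - r*r - 2*r*x := by linarith
        exact mul_pos (pow_pos (by linarith) 2) h
      rcases eq_or_lt_of_le hy1 with h | h
      · nlinarith [hE2]
      · have hp : (0:ℝ) < 1 + y := by linarith
        nlinarith [mul_pos hp hE1, mul_nonneg (by linarith : (0:ℝ) ≤ 1 - y) hE2.le]
    · exact pow_pos (mul_pos hx (hDpos x hx)) 2
end

section
/- Let μ be a Borel probability measure on the unit circle 𝕋 = {e^{iθ} : θ ∈ [−π, π]} and t > 0. Define h_t(r, θ) = 1 − (t/2)·((1 − r²)/(−ln r))·∫_𝕋 1/|1 − r e^{iθ} ξ|² dμ(ξ) for r ∈ (0,1). Then for each fixed θ, the map r ↦ h_t(r, θ) is non-increasing (indeed strictly decreasing) on (0,1). -/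
open Real Set MeasureTheory

noncomputable instance : MeasurableSpace Circle := borel Circle

instance : BorelSpace Circle := ⟨rfl⟩

-- Lemma A: 2 r (-log r) < 1 - r^2 on (0,1)
theorem lemA {r : ℝ} (hr0 : 0 < r) (hr1 : r < 1) : 2*r*(-Real.log r) < 1 - r^2 := by
  have h : StrictAntiOn (fun x : ℝ => 1 - x^2 + 2*(x*Real.log x)) (Ioc 0 1) := by
    apply strictAntiOn_of_deriv_neg (convex_Ioc 0 1)
    · apply ContinuousOn.add (by fun_prop)
      exact (continuousOn_id.mul (Real.continuousOn_log.mono (fun x hx => ne_of_gt hx.1))).const_smul 2 |>.congr (fun x hx => by simp [smul_eq_mul])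
    · intro x hx
      rw [interior_Ioc] at hx
      have hx0 : (0:ℝ) < x := hx.1
      have hd : HasDerivAt (fun x : ℝ => 1 - x^2 + 2*(x*Real.log x))
          (-(2*x) + 2*(Real.log x + 1)) x := by
        have h1 : HasDerivAt (fun x : ℝ => x * Real.log x) (Real.log x + 1) x := by
          have : HasDerivAt (fun x : ℝ => x * Real.log x) (1 * Real.log x + id x * x⁻¹) x := (hasDerivAt_id x).mul (Real.hasDerivAt_log hx0.ne')
          convert this using 1
          simp [hx0.ne']
        have h2 : HasDerivAt (fun x : ℝ => 1 - x^2) (-(2*x)) x := by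
          simpa using ((hasDerivAt_pow 2 x).const_sub 1)
        exact h2.add (h1.const_mul 2)
      rw [hd.deriv]
      have := Real.log_lt_sub_one_of_pos hx0 (ne_of_lt hx.2)
      linarith
  have := h (mem_Ioc.2 ⟨hr0, hr1.le⟩) (mem_Ioc.2 ⟨one_pos, le_refl 1⟩) hr1
  simp [Real.log_one] at this
  nlinarith [this]

-- Lemma B: 1 - r^2 < (-log r)*(1+r^2) on (0,1)
theorem lemB {r : ℝ} (hr0 : 0 < r) (hr1 : r < 1) : 1 - r^2 < (-Real.log r)*(1+r^2) := by
  have h : StrictMonoOn (fun x : ℝ => 1 - x^2 + (1+x^2)*Real.log x) (Ioc 0 1) := by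
    apply strictMonoOn_of_deriv_pos (convex_Ioc 0 1)
    · apply ContinuousOn.add (by fun_prop)
      exact (ContinuousOn.mul (by fun_prop) (Real.continuousOn_log.mono (fun x hx => ne_of_gt hx.1)))
    · intro x hx
      rw [interior_Ioc] at hx
      have hx0 : (0:ℝ) < x := hx.1
      have hd : HasDerivAt (fun x : ℝ => 1 - x^2 + (1+x^2)*Real.log x)
          (-(2*x) + ((2*x)*Real.log x + (1+x^2)*x⁻¹)) x := by
        have h2 : HasDerivAt (fun x : ℝ => 1 - x^2) (-(2*x)) x := by
          simpa using ((hasDerivAt_pow 2 x).const_sub 1)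
        have h1 : HasDerivAt (fun x : ℝ => (1+x^2)*Real.log x) ((2*x)*Real.log x + (1+x^2)*x⁻¹) x := by
          have ha : HasDerivAt (fun x : ℝ => 1 + x^2) (2*x) x := by
            simpa using ((hasDerivAt_pow 2 x).const_add 1)
          exact ha.mul (Real.hasDerivAt_log hx0.ne')
        exact h2.add h1
      rw [hd.deriv]
      -- need: 0 < -2x + 2x log x + (1+x²)/x , i.e. 0 < 1 - x² + 2x² log x
      have key : 0 < 1 - x^2 + 2*x^2*Real.log x := by
        have hinv : Real.log (x^2)⁻¹ < (x^2)⁻¹ - 1 :=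
          Real.log_lt_sub_one_of_pos (by positivity) (by
            intro hE
            have : x^2 = 1 := by field_simp at hE; linarith [hE]
            nlinarith [hx.2])
        rw [Real.log_inv, Real.log_pow] at hinv
        have hx2 : (0:ℝ) < x^2 := by positivity
        push_cast at hinv
        nlinarith [mul_pos hx2 (by linarith : 0 < (x^2)⁻¹ - 1 + 2*Real.log x), mul_inv_cancel₀ (ne_of_gt hx2)]
      have heq : -(2*x) + ((2*x)*Real.log x + (1+x^2)*x⁻¹) = (1 - x^2 + 2*x^2*Real.log x)/x := by
        field_simp; ring
      rw [heq]
      exact div_pos key hx0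
  have := h (mem_Ioc.2 ⟨hr0, hr1.le⟩) (mem_Ioc.2 ⟨one_pos, le_refl 1⟩) hr1
  simp [Real.log_one] at this
  nlinarith [this]

theorem alg (r y ℓ : ℝ) (hr0 : 0 < r) (hr1 : r < 1) (hy : -1 ≤ y)
    (hP : 2*r*ℓ < 1 - r^2) (hQ : 1 - r^2 < ℓ*(1+r^2)) :
    0 < (1-r^2)*(1-2*r*y+r^2) - 2*r*ℓ*(2*r - y*(1+r^2)) := by
  nlinarith [mul_pos (mul_pos (by nlinarith : (0:ℝ) < (1+r)^2) (by linarith : (0:ℝ) < 1 - r^2 - 2*r*ℓ)) (by norm_num : (0:ℝ) < 1),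
    mul_nonneg (mul_nonneg (by linarith : (0:ℝ) ≤ 2*r) (by linarith : (0:ℝ) ≤ 1+y)) (by linarith : (0:ℝ) ≤ ℓ*(1+r^2) - (1-r^2))]

theorem lemC (y : ℝ) (hy : -1 ≤ y) (hy1 : y ≤ 1) :
    StrictMonoOn (fun r : ℝ => (1 - r^2) / ((-Real.log r) * (1 - 2*r*y + r^2))) (Ioo 0 1) := by
  have hD : ∀ r : ℝ, 0 < r → r < 1 → 0 < 1 - 2*r*y + r^2 := by
    intro r h0 h1
    nlinarith [sq_nonneg (1-r), mul_nonneg h0.le (by linarith : (0:ℝ) ≤ 1 - y)]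
  have hL : ∀ r : ℝ, 0 < r → r < 1 → 0 < -Real.log r := by
    intro r h0 h1
    simpa using Real.log_neg h0 h1
  apply strictMonoOn_of_deriv_pos (convex_Ioo 0 1)
  · apply ContinuousOn.div (by fun_prop)
    · exact ContinuousOn.mul ((Real.continuousOn_log.mono (fun x hx => ne_of_gt hx.1)).neg) (by fun_prop)
    · intro x hx
      exact ne_of_gt (mul_pos (hL x hx.1 hx.2) (hD x hx.1 hx.2))
  · intro x hx
    rw [interior_Ioo] at hx
    obtain ⟨hx0, hx1⟩ := hx
    have hLpos : 0 < -Real.log x := hL x hx0 hx1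
    have hDpos : 0 < 1 - 2*x*y + x^2 := hD x hx0 hx1
    have hvne : (-Real.log x) * (1 - 2*x*y + x^2) ≠ 0 := ne_of_gt (mul_pos hLpos hDpos)
    have hu : HasDerivAt (fun r : ℝ => 1 - r^2) (-(2*x)) x := by
      simpa using ((hasDerivAt_pow 2 x).const_sub 1)
    have hv : HasDerivAt (fun r : ℝ => (-Real.log r) * (1 - 2*r*y + r^2))
        ((-x⁻¹) * (1 - 2*x*y + x^2) + (-Real.log x) * (-(2*y) + 2*x)) x := by
      have h1 : HasDerivAt (fun r : ℝ => -Real.log r) (-x⁻¹) x :=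
        (Real.hasDerivAt_log hx0.ne').neg
      have h2 : HasDerivAt (fun r : ℝ => 1 - 2*r*y + r^2) (-(2*y) + 2*x) x := by
        have ha : HasDerivAt (fun r : ℝ => 1 - 2*r*y) (-(2*y)) x := by
          simpa using (((hasDerivAt_id x).const_mul 2).mul_const y).const_sub 1
        have := ha.add (hasDerivAt_pow 2 x)
        simp at this
        exact this
      exact h1.mul h2
    have hder : HasDerivAt (fun r : ℝ => (1 - r^2) / ((-Real.log r) * (1 - 2*r*y + r^2))) _ x := hu.div hv hvne
    rw [hder.deriv]
    apply div_pos
    · have hF := alg x y (-Real.log x) hx0 hx1 hy (lemA hx0 hx1) (lemB hx0 hx1)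
      have hid : x * (-(2*x) * ((-Real.log x) * (1 - 2*x*y + x^2)) -
          (1 - x^2) * ((-x⁻¹) * (1 - 2*x*y + x^2) + (-Real.log x) * (-(2*y) + 2*x)))
          = (1-x^2)*(1-2*x*y+x^2) - 2*x*(-Real.log x)*(2*x - y*(1+x^2)) := by
        field_simp
        ring
      have h2 : 0 < x * (-(2*x) * ((-Real.log x) * (1 - 2*x*y + x^2)) -
          (1 - x^2) * ((-x⁻¹) * (1 - 2*x*y + x^2) + (-Real.log x) * (-(2*y) + 2*x))) := by
        rw [hid]; exact hF
      have h3 := mul_pos (inv_pos.2 hx0) h2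
      rwa [inv_mul_cancel_left₀ hx0.ne'] at h3
    · positivity

/-- Let `μ` be a Borel probability measure on the unit circle and `t > 0`. Define
`h_t(r, θ) = 1 − (t/2)·((1 − r²)/(−ln r))·∫ 1/|1 − r e^{iθ} ξ|² dμ(ξ)`.
Then for each fixed `θ`, the map `r ↦ h_t(r, θ)` is strictly decreasing on `(0,1)`. -/
theorem stmt4 (μ : Measure Circle) [IsProbabilityMeasure μ] (t : ℝ) (ht : 0 < t) (θ : ℝ) :
    StrictAntiOn
      (fun r : ℝ =>
        1 - t/2 * ((1 - r^2)/(-Real.log r)) *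
          ∫ ξ : Circle, 1 / ‖(1 - r * Complex.exp (θ * Complex.I) * ξ)‖ ^ 2 ∂μ)
      (Ioo (0 : ℝ) 1) := by
  set e : ℂ := Complex.exp (θ * Complex.I) with he
  -- basic facts about y ξ := (e * ξ).re
  have habs_w : ∀ ξ : Circle, ‖(e * ξ : ℂ)‖ = 1 := by
    intro ξ
    rw [norm_mul, he, Complex.norm_exp_ofReal_mul_I, Circle.norm_coe, one_mul]
  have hsq : ∀ ξ : Circle, ((e * ξ : ℂ)).re^2 + ((e * ξ : ℂ)).im^2 = 1 := by
    intro ξ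
    have h := Complex.sq_norm (e * ξ)
    rw [habs_w ξ, Complex.normSq_apply] at h
    nlinarith [h]
  have hy1 : ∀ ξ : Circle, -1 ≤ ((e * ξ : ℂ)).re := by
    intro ξ; nlinarith [hsq ξ, sq_nonneg (((e * ξ : ℂ)).im)]
  have hy2 : ∀ ξ : Circle, ((e * ξ : ℂ)).re ≤ 1 := by
    intro ξ; nlinarith [hsq ξ, sq_nonneg (((e * ξ : ℂ)).im)]
  have habs : ∀ (r : ℝ) (ξ : Circle),
      ‖1 - (r : ℂ) * e * ξ‖ ^ 2 = 1 - 2*r*((e * ξ : ℂ)).re + r^2 := by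
    intro r ξ
    have h2 : (1 : ℂ) - (r : ℂ) * e * ξ = 1 - (r : ℂ) * (e * ξ) := by ring
    rw [h2, Complex.sq_norm, Complex.normSq_apply]
    simp only [Complex.sub_re, Complex.sub_im, Complex.one_re, Complex.one_im,
      Complex.mul_re, Complex.mul_im, Complex.ofReal_re, Complex.ofReal_im]
    have h := hsq ξ
    simp only [Complex.mul_re, Complex.mul_im] at h
    nlinarith [h]
  have hDpos : ∀ (r : ℝ), 0 < r → r < 1 → ∀ ξ : Circle,
      0 < 1 - 2*r*((e * ξ : ℂ)).re + r^2 := by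
    intro r h0 h1 ξ
    nlinarith [sq_nonneg (1-r), mul_nonneg h0.le (by linarith [hy2 ξ] : (0:ℝ) ≤ 1 - ((e * ξ : ℂ)).re)]
  -- the pointwise function
  set Φ : ℝ → Circle → ℝ := fun r ξ =>
    t/2 * ((1 - r^2) / ((-Real.log r) * (1 - 2*r*((e * ξ : ℂ)).re + r^2))) with hΦ
  have hcont : ∀ (r : ℝ), 0 < r → r < 1 → Continuous (Φ r) := by
    intro r h0 h1
    apply Continuous.mul continuous_const
    apply Continuous.div continuous_const
    · apply Continuous.mul continuous_const
      have : Continuous fun ξ : Circle => ((e * ξ : ℂ)).re := by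
        exact Complex.continuous_re.comp (continuous_const.mul continuous_subtype_val)
      fun_prop
    · intro ξ
      exact ne_of_gt (mul_pos (by simpa using Real.log_neg h0 h1) (hDpos r h0 h1 ξ))
  have hint : ∀ (r : ℝ), 0 < r → r < 1 → Integrable (Φ r) μ := by
    intro r h0 h1
    exact integrableOn_univ.mp (((hcont r h0 h1).continuousOn).integrableOn_compact isCompact_univ)
  -- representation of the expression as ∫ Φ
  have hrepr : ∀ (r : ℝ), 0 < r → r < 1 →
      t/2 * ((1 - r^2)/(-Real.log r)) *
        (∫ ξ : Circle, 1 / ‖1 - (r:ℂ) * e * ξ‖ ^ 2 ∂μ)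
      = ∫ ξ : Circle, Φ r ξ ∂μ := by
    intro r h0 h1
    rw [← integral_const_mul]
    apply integral_congr_ae
    filter_upwards with ξ
    rw [habs r ξ, hΦ]
    simp only
    have hLne : -Real.log r ≠ 0 := ne_of_gt (by simpa using Real.log_neg h0 h1)
    have hDne : (1 - 2*r*((e * ξ : ℂ)).re + r^2) ≠ 0 := (hDpos r h0 h1 ξ).ne'
    field_simp
  -- main monotonicity
  intro r₁ hr₁ r₂ hr₂ hlt
  have h10 := hr₁.1; have h11 := hr₁.2
  have h20 := hr₂.1; have h21 := hr₂.2
  simp only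
  have hptw : ∀ ξ : Circle, Φ r₁ ξ < Φ r₂ ξ := by
    intro ξ
    have := lemC (((e * ξ : ℂ)).re) (hy1 ξ) (hy2 ξ) hr₁ hr₂ hlt
    exact mul_lt_mul_of_pos_left this (by positivity)
  have hpos : 0 < ∫ ξ : Circle, (Φ r₂ ξ - Φ r₁ ξ) ∂μ := by
    rw [integral_pos_iff_support_of_nonneg
      (fun ξ => sub_nonneg.2 (hptw ξ).le)
      ((hint r₂ h20 h21).sub (hint r₁ h10 h11))]
    have hsupp : Function.support (fun ξ : Circle => Φ r₂ ξ - Φ r₁ ξ) = univ := by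
      ext ξ
      simp only [Function.mem_support, mem_univ, iff_true]
      exact ne_of_gt (sub_pos.2 (hptw ξ))
    rw [hsupp]
    simp
  rw [integral_sub (hint r₂ h20 h21) (hint r₁ h10 h11)] at hpos
  have e1 := hrepr r₁ h10 h11
  have e2 := hrepr r₂ h20 h21
  have : t/2 * ((1 - r₁^2)/(-Real.log r₁)) *
        (∫ ξ : Circle, 1 / ‖1 - (r₁:ℂ) * e * ξ‖ ^ 2 ∂μ)
      < t/2 * ((1 - r₂^2)/(-Real.log r₂)) *
        (∫ ξ : Circle, 1 / ‖1 - (r₂:ℂ) * e * ξ‖ ^ 2 ∂μ) := by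
    rw [e1, e2]; linarith
  linarith [this]
end

section
/- Let μ be a probability measure on 𝕋, t > 0. Define v_t(θ) = sup{ r ∈ (0,1) : ((1−r²)/(−2 ln r))·∫ 1/|1 − r e^{i(θ+x)}|² dμ(e^{ix}) < 1/t }. Then v_t(θ) ≥ a_t, where a_t ∈ (0,1) is the unique solution of r·exp((t/2)(1+r)/(1−r)) = 1. -/
open Real Set MeasureTheory

lemma mem_S_aux (μ : Measure Circle) [IsProbabilityMeasure μ] (t θ a r : ℝ) (ht : 0 < t)
    (ha : a ∈ Ioo (0 : ℝ) 1) (haeq : a * exp ((t/2) * (1 + a) / (1 - a)) = 1)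
    (hr0 : 0 < r) (hra : r < a) :
    ((1 - r^2) / (-2 * Real.log r)) *
          ∫ ξ : Circle, 1 / ‖(1 - r * Complex.exp (θ * Complex.I) * ξ)‖ ^ 2 ∂μ
        < 1/t := by
  obtain ⟨ha0, ha1⟩ := ha
  have hr1 : r < 1 := hra.trans ha1
  -- g r < g a = 1
  have hfrac : (t/2) * (1 + r) / (1 - r) ≤ (t/2) * (1 + a) / (1 - a) := by
    rw [div_le_div_iff₀ (by linarith) (by linarith)]
    nlinarith
  have hg : r * exp ((t/2) * (1 + r) / (1 - r)) < 1 := by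
    calc r * exp ((t/2) * (1 + r) / (1 - r)) < a * exp ((t/2) * (1 + r) / (1 - r)) := by
          exact mul_lt_mul_of_pos_right hra (exp_pos _)
      _ ≤ a * exp ((t/2) * (1 + a) / (1 - a)) := by
          exact mul_le_mul_of_nonneg_left (exp_le_exp.mpr hfrac) ha0.le
      _ = 1 := haeq
  have hlog : Real.log r + (t/2) * (1 + r) / (1 - r) < 0 := by
    have := Real.log_lt_log (by positivity) hg
    rwa [Real.log_mul (ne_of_gt hr0) (ne_of_gt (exp_pos _)), Real.log_exp, Real.log_one] at this
  have hL : 0 < -2 * Real.log r := by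
    have := Real.log_neg hr0 hr1
    linarith
  have hkey : t * (1 + r) < (-2 * Real.log r) * (1 - r) := by
    have h1r : 0 < 1 - r := by linarith
    have e : t * ((1 + r) / (1 - r)) = 2 * (t/2 * (1 + r) / (1 - r)) := by ring
    have : t * ((1 + r) / (1 - r)) < -2 * Real.log r := by linarith [hlog, e]
    calc t * (1 + r) = t * ((1 + r) / (1 - r)) * (1 - r) := by field_simp
      _ < (-2 * Real.log r) * (1 - r) := by exact mul_lt_mul_of_pos_right this h1r
  -- integral bound
  have hintb : (∫ ξ : Circle, 1 / ‖(1 - r * Complex.exp (θ * Complex.I) * ξ)‖ ^ 2 ∂μ)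
      ≤ 1 / (1 - r)^2 := by
    have h1r : 0 < 1 - r := by linarith
    have hb : ∀ ξ : Circle,
        ‖1 / ‖(1 - r * Complex.exp (θ * Complex.I) * ξ)‖ ^ 2‖ ≤ 1 / (1 - r)^2 := by
      intro ξ
      have habs : 1 - r ≤ ‖(1 - r * Complex.exp (θ * Complex.I) * ξ)‖ := by
        have h1 : ‖((r : ℂ) * Complex.exp (θ * Complex.I) * ξ)‖ = r := by
          simp [map_mul, Complex.norm_exp, abs_of_pos hr0, Circle.norm_coe]
        calc 1 - r = ‖(1 : ℂ)‖ - ‖((r : ℂ) * Complex.exp (θ * Complex.I) * ξ)‖ := by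
              simp [h1, Circle.norm_coe, abs_of_pos hr0]
          _ ≤ _ := by
              simpa using
                norm_sub_norm_le (1 : ℂ) ((r : ℂ) * Complex.exp (θ * Complex.I) * ξ)
      rw [Real.norm_eq_abs, abs_of_nonneg (by positivity)]
      apply one_div_le_one_div_of_le (by positivity)
      exact pow_le_pow_left₀ h1r.le habs 2
    have := MeasureTheory.norm_integral_le_of_norm_le_const (μ := μ)
      (C := 1 / (1 - r)^2) (Filter.Eventually.of_forall hb)
    simp only [measure_univ, ENNReal.toReal_one, probReal_univ, mul_one] at this
    exact (Real.le_norm_self _).trans this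
  have hint0 : 0 ≤ (∫ ξ : Circle, 1 / ‖(1 - r * Complex.exp (θ * Complex.I) * ξ)‖ ^ 2 ∂μ) := by
    apply integral_nonneg
    intro ξ; positivity
  have h1r : 0 < 1 - r := by linarith
  calc ((1 - r^2) / (-2 * Real.log r)) *
          ∫ ξ : Circle, 1 / ‖(1 - r * Complex.exp (θ * Complex.I) * ξ)‖ ^ 2 ∂μ
      ≤ ((1 - r^2) / (-2 * Real.log r)) * (1 / (1 - r)^2) := by
        apply mul_le_mul_of_nonneg_left hintb
        exact div_nonneg (by nlinarith) hL.le
    _ < 1/t := by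
        rw [div_mul_div_comm, mul_one, div_lt_div_iff₀ (by positivity) ht]
        nlinarith [hkey, mul_pos hL h1r]

/-- `v_t(θ) = sup{r ∈ (0,1) : ((1−r²)/(−2 ln r))·∫ 1/|1 − r e^{iθ}ξ|² dμ(ξ) < 1/t}`
is bounded below by `a_t`, the unique solution in `(0,1)` of
`r·exp((t/2)(1+r)/(1−r)) = 1`. -/
theorem stmt10 (μ : Measure Circle) [IsProbabilityMeasure μ] (t θ a : ℝ) (ht : 0 < t)
    (ha : a ∈ Ioo (0 : ℝ) 1) (haeq : a * exp ((t/2) * (1 + a) / (1 - a)) = 1) :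
    a ≤ sSup {r : ℝ | r ∈ Ioo (0 : ℝ) 1 ∧
      ((1 - r^2) / (-2 * Real.log r)) *
          ∫ ξ : Circle, 1 / ‖(1 - r * Complex.exp (θ * Complex.I) * ξ)‖ ^ 2 ∂μ
        < 1/t} := by
  set S := {r : ℝ | r ∈ Ioo (0 : ℝ) 1 ∧
      ((1 - r^2) / (-2 * Real.log r)) *
          ∫ ξ : Circle, 1 / ‖(1 - r * Complex.exp (θ * Complex.I) * ξ)‖ ^ 2 ∂μ
        < 1/t} with hS
  obtain ⟨ha0, ha1⟩ := ha
  have hmem : ∀ r, 0 < r → r < a → r ∈ S := by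
    intro r hr0 hra
    exact ⟨⟨hr0, hra.trans ha1⟩, mem_S_aux μ t θ a r ht ⟨ha0, ha1⟩ haeq hr0 hra⟩
  have hbdd : BddAbove S := ⟨1, fun r hr => hr.1.2.le⟩
  apply le_of_forall_lt
  intro c hc
  set r := (max c 0 + a) / 2 with hrdef
  have hr0 : 0 < r := by
    have : (0:ℝ) ≤ max c 0 := le_max_right _ _
    positivity
  have hra : r < a := by
    have : max c 0 < a := max_lt hc ha0
    rw [hrdef]; linarith
  have hcr : c < r := by
    have : c ≤ max c 0 := le_max_left _ _
    rw [hrdef]; linarith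
  exact hcr.trans_le (le_csSup hbdd (hmem r hr0 hra))
end
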